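/- arXiv:2205.15365 — 10 statements merged into one kernel-verified Lean document; each statement's English description precedes it below -/
import Mathlib

section
/- Let M be a compact metric space, e : ℕ → M an injective map with dense range, P a Borel probability measure on M, and g : M → ℝ continuous; set v(n) = g(e(n)). If x ∈ ℝ satisfies P({g = x}) = 0 (i.e. x is a point of continuity of the distribution function F(y) = P({g < y})), then the set v⁻¹((−∞, x)) = {n ∈ ℕ : v(n) < x} is ν*-measurable and ν(v⁻¹((−∞, x))) = F(x) = P({g < x}). -/
open MeasureTheory

/-- Let `g : M → ℝ` be continuous, `v(n) = g(e(n))`. If `x` satisfies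
`P({g = x}) = 0`, then `v⁻¹((−∞, x))` is `ν*`-measurable and
`ν(v⁻¹((−∞, x))) = P({g < x})`, where `ν*(S) = P(cl(e(S)))`. -/
theorem stmt4 {M : Type*} [MetricSpace M] [CompactSpace M]
    [MeasurableSpace M] [BorelSpace M]
    (P : Measure M) [IsProbabilityMeasure P]
    (e : ℕ → M) (he : Function.Injective e) (hd : DenseRange e)
    (g : M → ℝ) (hg : Continuous g) (x : ℝ)
    (hx : P {α : M | g α = x} = 0) :
    P (closure (e '' {n : ℕ | g (e n) < x})) +
        P (closure (e '' {n : ℕ | g (e n) < x}ᶜ)) = 1 ∧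
      P (closure (e '' {n : ℕ | g (e n) < x})) = P {α : M | g α < x} := by
  set A := e '' {n : ℕ | g (e n) < x} with hA
  set B := e '' {n : ℕ | g (e n) < x}ᶜ with hB
  have hAopen : IsOpen {α : M | g α < x} := isOpen_lt hg continuous_const
  have hBopen : IsOpen {α : M | x < g α} := isOpen_lt continuous_const hg
  have hsub1 : {α : M | g α < x} ⊆ closure A := by
    refine (hd.open_subset_closure_inter hAopen).trans (closure_mono ?_)
    rintro y ⟨hy, n, rfl⟩
    exact ⟨n, hy, rfl⟩
  have hsub1' : closure A ⊆ {α : M | g α ≤ x} := by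
    apply closure_minimal ?_ (isClosed_le hg continuous_const)
    rintro y ⟨n, hn, rfl⟩
    exact le_of_lt (show g (e n) < x from hn)
  have hsub2 : {α : M | x < g α} ⊆ closure B := by
    refine (hd.open_subset_closure_inter hBopen).trans (closure_mono ?_)
    rintro y ⟨hy, n, rfl⟩
    exact ⟨n, not_lt.mpr (le_of_lt (show x < g (e n) from hy)), rfl⟩
  have hsub2' : closure B ⊆ {α : M | x ≤ g α} := by
    apply closure_minimal ?_ (isClosed_le continuous_const hg)
    rintro y ⟨n, hn, rfl⟩
    exact (not_lt.mp (show ¬ g (e n) < x from hn) : x ≤ g (e n))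
  have hle : P {α : M | g α ≤ x} = P {α : M | g α < x} := by
    apply le_antisymm
    · calc P {α : M | g α ≤ x}
          ≤ P ({α : M | g α < x} ∪ {α : M | g α = x}) := by
            apply measure_mono
            intro y hy
            rcases lt_or_eq_of_le (show g y ≤ x from hy) with h | h
            · exact Or.inl h
            · exact Or.inr h
        _ ≤ P {α : M | g α < x} + P {α : M | g α = x} := measure_union_le _ _
        _ = P {α : M | g α < x} := by rw [hx, add_zero]
    · exact measure_mono fun y hy => le_of_lt (show g y < x from hy)
  have hge : P {α : M | x ≤ g α} = P {α : M | x < g α} := by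
    apply le_antisymm
    · calc P {α : M | x ≤ g α}
          ≤ P ({α : M | x < g α} ∪ {α : M | g α = x}) := by
            apply measure_mono
            intro y hy
            rcases lt_or_eq_of_le (show x ≤ g y from hy) with h | h
            · exact Or.inl h
            · exact Or.inr h.symm
        _ ≤ P {α : M | x < g α} + P {α : M | g α = x} := measure_union_le _ _
        _ = P {α : M | x < g α} := by rw [hx, add_zero]
    · exact measure_mono fun y hy => le_of_lt (show x < g y from hy)
  have hclA : P (closure A) = P {α : M | g α < x} :=
    le_antisymm (hle ▸ measure_mono hsub1') (measure_mono hsub1)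
  have hclB : P (closure B) = P {α : M | x < g α} :=
    le_antisymm (hge ▸ measure_mono hsub2') (measure_mono hsub2)
  refine ⟨?_, hclA⟩
  have hcompl : {α : M | x < g α} = {α : M | g α ≤ x}ᶜ := by
    ext y; simp [not_le]
  rw [hclA, hclB, ← hle, hcompl,
    measure_add_measure_compl (measurableSet_le hg.measurable measurable_const)]
  exact measure_univ
end

section
/- Let M be a compact metric space, e : ℕ → M an injective map with dense range, P a Borel probability measure on M, and g : M → ℝ continuous; set v(n) = g(e(n)) and F₀(x) = ν*({n ∈ ℕ : v(n) < x}). If F₀ is continuous at a point x ∈ ℝ, then F₀(x) = P({g ≤ x}). -/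
open MeasureTheory

/-- Let `g : M → ℝ` be continuous, `v(n) = g(e(n))` and
`F₀(x) = ν*({n | v(n) < x}) = P(cl(e({n | v(n) < x})))`. If `F₀` is continuous
at a point `x`, then `F₀(x) = P({g ≤ x})`. -/
theorem stmt5 {M : Type*} [MetricSpace M] [CompactSpace M]
    [MeasurableSpace M] [BorelSpace M]
    (P : Measure M) [IsProbabilityMeasure P]
    (e : ℕ → M) (he : Function.Injective e) (hd : DenseRange e)
    (g : M → ℝ) (hg : Continuous g) (x : ℝ)
    (hx : ContinuousAt
      (fun y : ℝ => (P (closure (e '' {n : ℕ | g (e n) < y}))).toReal) x) :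
    (P (closure (e '' {n : ℕ | g (e n) < x}))).toReal =
      (P {α : M | g α ≤ x}).toReal := by
  set F : ℝ → ℝ := fun y : ℝ => (P (closure (e '' {n : ℕ | g (e n) < y}))).toReal with hF
  have himg : ∀ y : ℝ, e '' {n : ℕ | g (e n) < y} = Set.range e ∩ {m : M | g m < y} := by
    intro y
    ext m
    constructor
    · rintro ⟨n, hn, rfl⟩; exact ⟨⟨n, rfl⟩, hn⟩
    · rintro ⟨⟨n, rfl⟩, hm⟩; exact ⟨n, hm, rfl⟩
  have hlow : ∀ y : ℝ, (P {m : M | g m < y}).toReal ≤ F y := by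
    intro y
    apply ENNReal.toReal_mono (measure_ne_top _ _)
    apply measure_mono
    rw [himg, Set.inter_comm]
    exact hd.open_subset_closure_inter (isOpen_lt hg continuous_const)
  have hup : ∀ y : ℝ, F y ≤ (P {m : M | g m ≤ y}).toReal := by
    intro y
    apply ENNReal.toReal_mono (measure_ne_top _ _)
    apply measure_mono
    have h1 : e '' {n : ℕ | g (e n) < y} ⊆ {m : M | g m ≤ y} := by
      rintro m ⟨n, hn, rfl⟩; show g (e n) ≤ y; exact le_of_lt hn
    calc closure (e '' {n : ℕ | g (e n) < y}) ⊆ closure {m : M | g m ≤ y} :=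
          closure_mono h1
      _ = {m : M | g m ≤ y} := (isClosed_le hg continuous_const).closure_eq
  have h1 : F x ≤ (P {α : M | g α ≤ x}).toReal := by
    refine le_of_tendsto (hx.tendsto.mono_left nhdsWithin_le_nhds :
      Filter.Tendsto F (nhdsWithin x (Set.Iio x)) _) ?_
    filter_upwards [self_mem_nhdsWithin] with y (hy : y < x)
    refine (hup y).trans ?_
    apply ENNReal.toReal_mono (measure_ne_top _ _)
    exact measure_mono fun m hm => le_of_lt (lt_of_le_of_lt hm hy)
  have h2 : (P {α : M | g α ≤ x}).toReal ≤ F x := by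
    refine ge_of_tendsto (hx.tendsto.mono_left nhdsWithin_le_nhds :
      Filter.Tendsto F (nhdsWithin x (Set.Ioi x)) _) ?_
    filter_upwards [self_mem_nhdsWithin] with y (hy : x < y)
    refine le_trans ?_ (hlow y)
    apply ENNReal.toReal_mono (measure_ne_top _ _)
    exact measure_mono fun m hm => lt_of_le_of_lt hm hy
  exact le_antisymm h1 h2
end

section
/- Let M be a compact metric space, e : ℕ → M an injective map with dense range, P a Borel probability measure on M, and g : M → ℝ continuous; set v(n) = g(e(n)). Then v has a continuous ν-distribution function if and only if P({g = x}) = 0 for every real number x. -/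
/-!
Write `μ` for the law of `g` under `P`. Since `e` has dense range and `g` is continuous,
`ν*({n | v n < x})` lies between `μ (Iio x)` and `μ (Iic x)`, and `ν*({n | x ≤ v n})` between
`μ (Ioi x)` and `μ (Ici x)`. If `μ` has no atoms these bounds collapse, so the sets are
`ν*`-measurable and the distribution function is the cdf of `μ`, which is continuous. Conversely,
the bounds squeeze the cdf of `μ` between `F x` and `F y` for all `x < y`, so a continuous `F`
must equal the cdf, which is then continuous, i.e. `μ` has no atoms.
-/

open MeasureTheory Set Filter Topology ProbabilityTheory

theorem StieltjesFunction.continuousAt_iff_measure_singleton_eq_zero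
    (f : StieltjesFunction ℝ) (x : ℝ) : ContinuousAt f x ↔ f.measure {x} = 0 := by
  rw [f.measure_singleton, ENNReal.ofReal_eq_zero, sub_nonpos,
    continuousAt_iff_continuous_left_right, and_iff_left (f.right_continuous x),
    ← continuousWithinAt_Iio_iff_Iic, f.mono.continuousWithinAt_Iio_iff_leftLim_eq]
  exact ⟨fun h => h.ge, fun h => le_antisymm (f.mono.leftLim_le le_rfl) h⟩

theorem ProbabilityTheory.continuous_cdf_iff (μ : Measure ℝ) [IsProbabilityMeasure μ] :
    Continuous (cdf μ) ↔ ∀ x, μ {x} = 0 := by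
  simp only [continuous_iff_continuousAt,
    StieltjesFunction.continuousAt_iff_measure_singleton_eq_zero, measure_cdf]

theorem eq_of_le_of_forall_lt_imp_le {α β : Type*} [TopologicalSpace α] [LinearOrder α]
    [OrderTopology α] [DenselyOrdered α] [NoMaxOrder α] [TopologicalSpace β] [PartialOrder β]
    [OrderClosedTopology β] {f g : α → β} (hf : Continuous f) (hfg : ∀ x, f x ≤ g x)
    (hgf : ∀ x y, x < y → g x ≤ f y) : g = f :=
  funext fun x => le_antisymm
    (ge_of_tendsto (hf.continuousAt.tendsto.mono_left nhdsWithin_le_nhds)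
      (eventually_nhdsWithin_of_forall (s := Ioi x) fun _ => hgf x _)) (hfg x)

section DenseRange

variable {ι M : Type*} [TopologicalSpace M] [MeasurableSpace M] [OpensMeasurableSpace M]
  (P : Measure M) {e : ι → M} {g : M → ℝ}

theorem measure_map_Iio_le_measure_closure_image (hd : DenseRange e) (hg : Continuous g)
    (x : ℝ) : P.map g (Iio x) ≤ P (closure (e '' {n | g (e n) < x})) := by
  rw [Measure.map_apply hg.measurable measurableSet_Iio]
  exact measure_mono (hd.subset_closure_image_preimage_of_isOpen (isOpen_Iio.preimage hg))

theorem measure_closure_image_le_measure_map_Iic (hg : Continuous g) (x : ℝ) :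
    P (closure (e '' {n | g (e n) < x})) ≤ P.map g (Iic x) := by
  rw [Measure.map_apply hg.measurable measurableSet_Iic]
  exact measure_mono (closure_minimal (image_subset_iff.2 fun _ (hn : g _ < x) => hn.le)
    (isClosed_Iic.preimage hg))

theorem measure_map_Ioi_le_measure_closure_image_compl (hd : DenseRange e) (hg : Continuous g)
    (x : ℝ) : P.map g (Ioi x) ≤ P (closure (e '' {n | g (e n) < x}ᶜ)) := by
  rw [Measure.map_apply hg.measurable measurableSet_Ioi]
  exact measure_mono ((hd.subset_closure_image_preimage_of_isOpen (isOpen_Ioi.preimage hg)).trans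
    (closure_mono (image_mono fun _ (hn : x < g _) => not_lt.2 hn.le)))

theorem measure_closure_image_compl_le_measure_map_Ici (hg : Continuous g) (x : ℝ) :
    P (closure (e '' {n | g (e n) < x}ᶜ)) ≤ P.map g (Ici x) := by
  rw [Measure.map_apply hg.measurable measurableSet_Ici]
  exact measure_mono (closure_minimal (image_subset_iff.2 fun _ (hn : ¬g _ < x) => not_lt.1 hn)
    (isClosed_Ici.preimage hg))

theorem measure_closure_image_eq_measure_map_Iic (hd : DenseRange e) (hg : Continuous g)
    {x : ℝ} (hx : P.map g {x} = 0) : P (closure (e '' {n | g (e n) < x})) = P.map g (Iic x) :=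
  le_antisymm (measure_closure_image_le_measure_map_Iic P hg x)
    ((measure_congr (Iio_ae_eq_Iic' hx)).ge.trans
      (measure_map_Iio_le_measure_closure_image P hd hg x))

theorem measure_closure_image_compl_eq_measure_map_Ioi (hd : DenseRange e) (hg : Continuous g)
    {x : ℝ} (hx : P.map g {x} = 0) : P (closure (e '' {n | g (e n) < x}ᶜ)) = P.map g (Ioi x) :=
  le_antisymm ((measure_closure_image_compl_le_measure_map_Ici P hg x).trans
    (measure_congr (Ioi_ae_eq_Ici' hx)).ge)
    (measure_map_Ioi_le_measure_closure_image_compl P hd hg x)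

end DenseRange

theorem stmt6_general {M : Type*} [MetricSpace M]
    [MeasurableSpace M] [BorelSpace M]
    (P : Measure M) [IsProbabilityMeasure P]
    (e : ℕ → M) (hd : DenseRange e)
    (g : M → ℝ) (hg : Continuous g) :
    (∃ F : ℝ → ℝ, Continuous F ∧ ∀ x : ℝ,
        P (closure (e '' {n : ℕ | g (e n) < x})) +
            P (closure (e '' {n : ℕ | g (e n) < x}ᶜ)) = 1 ∧
          (P (closure (e '' {n : ℕ | g (e n) < x}))).toReal = F x) ↔
      ∀ x : ℝ, P {α : M | g α = x} = 0 := by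
  set μ := P.map g
  have : IsProbabilityMeasure μ := Measure.isProbabilityMeasure_map hg.aemeasurable
  have hatom (x : ℝ) : μ {x} = P {α | g α = x} :=
    Measure.map_apply hg.measurable (measurableSet_singleton x)
  simp_rw [← hatom, ← continuous_cdf_iff]
  constructor
  · rintro ⟨F, hF, hFx⟩
    convert hF
    refine eq_of_le_of_forall_lt_imp_le hF (fun x => ?_) (fun x y hxy => ?_)
    all_goals simp only [← (hFx _).2, cdf_eq_real, measureReal_def]
    · exact ENNReal.toReal_mono (measure_ne_top _ _)
        (measure_closure_image_le_measure_map_Iic P hg x)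
    · exact ENNReal.toReal_mono (measure_ne_top _ _) ((measure_mono (Iic_subset_Iio.2 hxy)).trans
        (measure_map_Iio_le_measure_closure_image P hd hg y))
  · intro hcont
    have hnull := (continuous_cdf_iff μ).1 hcont
    refine ⟨cdf μ, hcont, fun x => ?_⟩
    rw [measure_closure_image_eq_measure_map_Iic P hd hg (hnull x),
      measure_closure_image_compl_eq_measure_map_Ioi P hd hg (hnull x), ← compl_Iic,
      measure_add_measure_compl measurableSet_Iic, measure_univ, cdf_eq_real, measureReal_def]
    exact ⟨rfl, rfl⟩

/-- Let `g : M → ℝ` be continuous and `v(n) = g(e(n))`. Then `v` has a continuous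
`ν`-distribution function (a continuous `F : ℝ → ℝ` such that for every `x` the set
`{n | v(n) < x}` is `ν*`-measurable with `ν({n | v(n) < x}) = F(x)`) if and only if
`P({g = x}) = 0` for every real `x`. Here `ν*(S) = P(cl(e(S)))`. -/
theorem stmt6 {M : Type*} [MetricSpace M] [CompactSpace M]
    [MeasurableSpace M] [BorelSpace M]
    (P : Measure M) [IsProbabilityMeasure P]
    (e : ℕ → M) (he : Function.Injective e) (hd : DenseRange e)
    (g : M → ℝ) (hg : Continuous g) :
    (∃ F : ℝ → ℝ, Continuous F ∧ ∀ x : ℝ,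
        P (closure (e '' {n : ℕ | g (e n) < x})) +
            P (closure (e '' {n : ℕ | g (e n) < x}ᶜ)) = 1 ∧
          (P (closure (e '' {n : ℕ | g (e n) < x}))).toReal = F x) ↔
      ∀ x : ℝ, P {α : M | g α = x} = 0 :=
  stmt6_general P e hd g hg
end

section
/- Let M be a compact metric space, e : ℕ → M an injective map with dense range, P a Borel probability measure on M, and g : M → ℝ continuous; suppose v(n) = g(e(n)) has continuous ν-distribution function F. Then for every Borel set S ⊆ ℝ, P(g⁻¹(S)) = λ_F(S), i.e. the pushforward measure of P under g equals the Lebesgue–Stieltjes measure associated with F. -/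
/-!
The closure of `e '' {n | g (e n) < x}` is squeezed between the open set `{g < x}` (because `e`
has dense range) and the closed set `{g ≤ x}`. Hence the real-valued distribution function
`x ↦ P(g ≤ x)` of the pushforward `P.map g` satisfies `P(g < x) ≤ F x ≤ P(g ≤ x)`; since
`P(g ≤ x) ≤ P(g < y)` for `y > x`, right continuity of `F` forces `P(g ≤ x) = F x`. Two measures
on `ℝ` with the same increments over the intervals `Ioc a b` coincide.
-/

open MeasureTheory Set

theorem DenseRange.subset_closure_image_preimage {X ι : Type*} [TopologicalSpace X]
    {e : ι → X} (he : DenseRange e) {U : Set X} (hU : IsOpen U) :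
    U ⊆ closure (e '' (e ⁻¹' U)) := by
  rw [image_preimage_eq_inter_range]
  exact he.open_subset_closure_inter hU

theorem closure_image_preimage_lt_subset_le {X ι : Type*} [TopologicalSpace X]
    (e : ι → X) {g : X → ℝ} (hg : Continuous g) (x : ℝ) :
    closure (e '' (e ⁻¹' {y | g y < x})) ⊆ {y | g y ≤ x} :=
  (closure_mono (image_preimage_subset e _)).trans (closure_lt_subset_le hg continuous_const)

namespace StieltjesFunction

theorem measureReal_Iic_eq {ν : Measure ℝ} [IsFiniteMeasure ν] (F : StieltjesFunction ℝ)
    (hIio : ∀ x, ν.real (Iio x) ≤ F x) (hIic : ∀ x, F x ≤ ν.real (Iic x)) (x : ℝ) :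
    ν.real (Iic x) = F x := by
  refine le_antisymm ?_ (hIic x)
  rw [← F.iInf_Ioi_eq x]
  have : Nonempty (Ioi x) := ⟨⟨x + 1, by simp⟩⟩
  exact le_ciInf fun y => (measureReal_mono (Iic_subset_Iio.2 y.2)).trans (hIio y)

theorem measure_eq_of_measureReal_Iio_le_le_Iic {ν : Measure ℝ} [IsFiniteMeasure ν]
    (F : StieltjesFunction ℝ)
    (hIio : ∀ x, ν.real (Iio x) ≤ F x) (hIic : ∀ x, F x ≤ ν.real (Iic x)) :
    F.measure = ν := by
  refine (Measure.ext_of_Ioc' ν F.measure (fun _ _ _ => measure_ne_top _ _) fun a b hab => ?_).symm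
  rw [F.measure_Ioc, ← ofReal_measureReal, ← Iic_sdiff_Iic,
    measureReal_sdiff (Iic_subset_Iic.2 hab.le) measurableSet_Iic,
    F.measureReal_Iic_eq hIio hIic, F.measureReal_Iic_eq hIio hIic]

end StieltjesFunction

theorem stmt7_general {M : Type*} [MetricSpace M]
    [MeasurableSpace M] [BorelSpace M]
    (P : Measure M) [IsProbabilityMeasure P]
    (e : ℕ → M) (hd : DenseRange e)
    (g : M → ℝ) (hg : Continuous g)
    (F : StieltjesFunction ℝ)
    (hF : ∀ x : ℝ,
      P (closure (e '' {n : ℕ | g (e n) < x})) +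
          P (closure (e '' {n : ℕ | g (e n) < x}ᶜ)) = 1 ∧
        (P (closure (e '' {n : ℕ | g (e n) < x}))).toReal = F x) :
    ∀ S : Set ℝ, MeasurableSet S → P (g ⁻¹' S) = F.measure S := by
  have hgm := hg.measurable
  have hmap : F.measure = P.map g := by
    refine F.measure_eq_of_measureReal_Iio_le_le_Iic (fun x => ?_) (fun x => ?_) <;>
      rw [map_measureReal_apply hgm (by measurability), ← (hF x).2]
    · exact measureReal_mono (hd.subset_closure_image_preimage (isOpen_Iio.preimage hg))
    · exact measureReal_mono (closure_image_preimage_lt_subset_le e hg x)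
  intro S hS
  rw [hmap, Measure.map_apply hgm hS]

/-- Let `g : M → ℝ` be continuous and suppose `v(n) = g(e(n))` has a continuous
`ν`-distribution function `F` (a nondecreasing continuous function, here packaged
as a Stieltjes function). Then for every Borel set `S ⊆ ℝ` we have
`P(g⁻¹(S)) = λ_F(S)`, the Lebesgue–Stieltjes measure of `S`. -/
theorem stmt7 {M : Type*} [MetricSpace M] [CompactSpace M]
    [MeasurableSpace M] [BorelSpace M]
    (P : Measure M) [IsProbabilityMeasure P]
    (e : ℕ → M) (he : Function.Injective e) (hd : DenseRange e)
    (g : M → ℝ) (hg : Continuous g)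
    (F : StieltjesFunction ℝ) (hFcont : Continuous F)
    (hF : ∀ x : ℝ,
      P (closure (e '' {n : ℕ | g (e n) < x})) +
          P (closure (e '' {n : ℕ | g (e n) < x}ᶜ)) = 1 ∧
        (P (closure (e '' {n : ℕ | g (e n) < x}))).toReal = F x) :
    ∀ S : Set ℝ, MeasurableSet S → P (g ⁻¹' S) = F.measure S :=
  stmt7_general P e hd g hg F hF
end

section
/- Let M be a compact metric space, e : ℕ → M an injective map with dense range, P a Borel probability measure on M, and g : M → [a,b] continuous with a < b; set v(n) = g(e(n)). Suppose v has a ν-distribution function F that is absolutely continuous (its Lebesgue–Stieltjes measure λ_F is absolutely continuous with respect to Lebesgue measure). If f : [a,b] → [a,b] is continuous and λ(f⁻¹({x})) = 0 for every x ∈ [a,b] (λ = Lebesgue measure), then the sequence {f(v(n))} has a continuous ν-distribution function. -/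
open MeasureTheory Set Filter Topology ProbabilityTheory

/-!
For continuous `h : M → ℝ` and dense `e`, the closure of `e '' {n | h (e n) < x}` lies between
the open set `h ⁻¹' Iio x` and the closed set `h ⁻¹' Iic x`, and the closure of the complementary
index set lies in `h ⁻¹' Ici x`. So wherever `P.map h` has no atom the set is `ν*`-measurable
with density given by the cdf of `P.map h`, and if `P.map h` has no atoms at all this cdf is the
continuous distribution function sought. For `h = g` the same sandwich, together with the
right-continuity of `F`, identifies `P.map g` with `F.measure`. For `h = f ∘ g` the atoms of
`P.map h` are the `F.measure`-masses of the fibres of `f` on `[a, b]`, which vanish because those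
fibres are Lebesgue-null and `F.measure ≪ volume`.
-/

theorem StieltjesFunction.continuous_of_measure_singleton (F : StieltjesFunction ℝ)
    (h : ∀ x, F.measure {x} = 0) : Continuous F := by
  refine continuous_iff_continuousAt.2 fun x => ?_
  have hleft : F x ≤ Function.leftLim F x := by
    simpa only [F.measure_singleton, ENNReal.ofReal_eq_zero, sub_nonpos] using h x
  rw [F.mono.continuousAt_iff_leftLim_eq_rightLim, F.rightLim_eq]
  exact le_antisymm (F.mono.leftLim_le le_rfl) hleft

theorem ProbabilityTheory.continuous_cdf (μ : Measure ℝ) [IsProbabilityMeasure μ]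
    (h : ∀ x, μ {x} = 0) : Continuous (cdf μ) :=
  (cdf μ).continuous_of_measure_singleton fun x => by rw [measure_cdf, h]

theorem DenseRange.subset_closure_image {M : Type*} [TopologicalSpace M] {e : ℕ → M}
    (hd : DenseRange e) {U : Set M} (hU : IsOpen U) {S : Set ℕ} (hS : e ⁻¹' U ⊆ S) :
    U ⊆ closure (e '' S) := by
  refine (hd.open_subset_closure_inter hU).trans (closure_mono ?_)
  rw [← image_preimage_eq_inter_range]
  exact image_mono hS

theorem measure_preimage_Iic_eq_Iio {α : Type*} [MeasurableSpace α] (μ : Measure α) {h : α → ℝ}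
    {x : ℝ} (hx : μ (h ⁻¹' {x}) = 0) :
    μ (h ⁻¹' Iic x) = μ (h ⁻¹' Iio x) := by
  refine le_antisymm ?_ (measure_mono (preimage_mono Iio_subset_Iic_self))
  rw [← Iio_union_right, preimage_union]
  exact (measure_union_le _ _).trans_eq (by rw [hx, add_zero])

section DenseSequence

variable {M : Type*} [TopologicalSpace M] [MeasurableSpace M]
  (P : Measure M) {e : ℕ → M} {h : M → ℝ}

theorem measure_preimage_Iio_le_closure_image (hd : DenseRange e) (hh : Continuous h) (x : ℝ) :
    P (h ⁻¹' Iio x) ≤ P (closure (e '' {n | h (e n) < x})) :=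
  measure_mono (hd.subset_closure_image (isOpen_Iio.preimage hh) subset_rfl)

theorem measure_closure_image_le_preimage_Iic (hh : Continuous h) (x : ℝ) :
    P (closure (e '' {n | h (e n) < x})) ≤ P (h ⁻¹' Iic x) :=
  measure_mono <| (isClosed_Iic.preimage hh).closure_subset_iff.2 <|
    image_subset_iff.2 fun _ (hn : h _ < x) => hn.le

theorem measure_closure_image_compl_le_preimage_Ici (hh : Continuous h) (x : ℝ) :
    P (closure (e '' {n | h (e n) < x}ᶜ)) ≤ P (h ⁻¹' Ici x) :=
  measure_mono <| (isClosed_Ici.preimage hh).closure_subset_iff.2 <|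
    image_subset_iff.2 fun _ (hn : ¬h _ < x) => not_lt.1 hn

theorem measure_closure_image_eq_of_measure_preimage_singleton (hd : DenseRange e)
    (hh : Continuous h) {x : ℝ} (hx : P (h ⁻¹' {x}) = 0) :
    P (closure (e '' {n | h (e n) < x})) = P (h ⁻¹' Iic x) :=
  le_antisymm (measure_closure_image_le_preimage_Iic P hh x) <|
    (measure_preimage_Iic_eq_Iio P hx).trans_le (measure_preimage_Iio_le_closure_image P hd hh x)

theorem measure_closure_image_add_compl_eq_one [OpensMeasurableSpace M] [IsProbabilityMeasure P]
    (hd : DenseRange e) (hh : Continuous h) {x : ℝ} (hx : P (h ⁻¹' {x}) = 0) :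
    P (closure (e '' {n | h (e n) < x})) + P (closure (e '' {n | h (e n) < x}ᶜ)) = 1 := by
  refine le_antisymm ?_ ?_
  · calc _ ≤ P (h ⁻¹' Iic x) + P (h ⁻¹' Ici x) :=
          add_le_add (measure_closure_image_le_preimage_Iic P hh x)
            (measure_closure_image_compl_le_preimage_Ici P hh x)
      _ = P (h ⁻¹' Iio x) + P (h ⁻¹' Ici x) := by
          rw [measure_preimage_Iic_eq_Iio P hx]
      _ = 1 := by
          rw [← measure_union ((Iio_disjoint_Ici le_rfl).preimage h)
            (measurableSet_Ici.preimage hh.measurable), ← preimage_union, Iio_union_Ici,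
            preimage_univ, measure_univ]
  · calc (1 : ENNReal)
        = P (closure (e '' {n | h (e n) < x}) ∪ closure (e '' {n | h (e n) < x}ᶜ)) := by
          rw [← closure_union, ← image_union, union_compl_self, image_univ, hd.closure_range,
            measure_univ]
      _ ≤ _ := measure_union_le _ _

theorem map_eq_measure_of_toReal_measure_closure_image [OpensMeasurableSpace M]
    [IsProbabilityMeasure P]
    (hd : DenseRange e) (hh : Continuous h) (F : StieltjesFunction ℝ)
    (hF : ∀ x, (P (closure (e '' {n | h (e n) < x}))).toReal = F x) :
    P.map h = F.measure := by
  have : IsProbabilityMeasure (P.map h) := Measure.isProbabilityMeasure_map hh.aemeasurable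
  suffices hcdf : cdf (P.map h) = F by rw [← hcdf, measure_cdf]
  have cdf_eq : ∀ x, cdf (P.map h) x = (P (h ⁻¹' Iic x)).toReal := fun x => by
    rw [cdf_eq_real, map_measureReal_apply hh.measurable measurableSet_Iic, measureReal_def]
  ext x
  refine le_antisymm ?_ ?_
  · -- `F` dominates the cdf only strictly to the right of `x`; right-continuity closes the gap.
    refine ge_of_tendsto ((F.right_continuous x).mono Ioi_subset_Ici_self)
      (eventually_nhdsWithin_of_forall fun y (hy : x < y) => ?_)
    rw [cdf_eq, ← hF]
    exact ENNReal.toReal_mono (measure_ne_top _ _) <|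
      (measure_mono (preimage_mono (Iic_subset_Iio.2 hy))).trans
        (measure_preimage_Iio_le_closure_image P hd hh y)
  · rw [cdf_eq, ← hF]
    exact ENNReal.toReal_mono (measure_ne_top _ _) (measure_closure_image_le_preimage_Iic P hh x)

end DenseSequence

theorem stmt8_general {M : Type*} [MetricSpace M]
    [MeasurableSpace M] [BorelSpace M]
    (P : Measure M) [IsProbabilityMeasure P]
    (e : ℕ → M) (hd : DenseRange e)
    (a b : ℝ)
    (g : M → ℝ) (hg : Continuous g) (hgmem : ∀ α : M, g α ∈ Set.Icc a b)
    (F : StieltjesFunction ℝ)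
    (hFdist : ∀ x : ℝ,
      P (closure (e '' {n : ℕ | g (e n) < x})) +
          P (closure (e '' {n : ℕ | g (e n) < x}ᶜ)) = 1 ∧
        (P (closure (e '' {n : ℕ | g (e n) < x}))).toReal = F x)
    (hFac : F.measure ≪ volume)
    (f : ℝ → ℝ) (hf : ContinuousOn f (Set.Icc a b))
    (hfib : ∀ x : ℝ, volume (f ⁻¹' {x} ∩ Set.Icc a b) = 0) :
    ∃ G : ℝ → ℝ, Continuous G ∧ ∀ x : ℝ,
      P (closure (e '' {n : ℕ | f (g (e n)) < x})) +
          P (closure (e '' {n : ℕ | f (g (e n)) < x}ᶜ)) = 1 ∧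
        (P (closure (e '' {n : ℕ | f (g (e n)) < x}))).toReal = G x := by
  set h : M → ℝ := fun m => f (g m)
  have hh : Continuous h := hf.comp_continuous hg hgmem
  have : IsProbabilityMeasure (P.map h) := Measure.isProbabilityMeasure_map hh.aemeasurable
  have hmap : P.map g = F.measure :=
    map_eq_measure_of_toReal_measure_closure_image P hd hg F fun x => (hFdist x).2
  have hfiber : ∀ x, P (h ⁻¹' {x}) = 0 := fun x => by
    have hsub : h ⁻¹' {x} ⊆ g ⁻¹' (f ⁻¹' {x} ∩ Icc a b) := fun m hm => ⟨hm, hgmem m⟩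
    refine measure_mono_null hsub (le_zero_iff.1 ?_)
    calc P (g ⁻¹' (f ⁻¹' {x} ∩ Icc a b)) ≤ P.map g (f ⁻¹' {x} ∩ Icc a b) :=
          Measure.le_map_apply hg.aemeasurable _
      _ = 0 := by rw [hmap]; exact hFac (hfib x)
  refine ⟨cdf (P.map h), continuous_cdf _ fun x => ?_, fun x => ⟨?_, ?_⟩⟩
  · rw [Measure.map_apply hh.measurable (measurableSet_singleton x), hfiber x]
  · exact measure_closure_image_add_compl_eq_one P hd hh (hfiber x)
  · rw [cdf_eq_real, map_measureReal_apply hh.measurable measurableSet_Iic, measureReal_def,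
      measure_closure_image_eq_of_measure_preimage_singleton P hd hh (hfiber x)]

/-- Let `g : M → [a,b]` be continuous (`a < b`), `v(n) = g(e(n))`, and suppose `v`
has a `ν`-distribution function `F` that is absolutely continuous (its
Lebesgue–Stieltjes measure is absolutely continuous w.r.t. Lebesgue measure).
If `f : [a,b] → [a,b]` is continuous and `λ(f⁻¹({x})) = 0` for every `x ∈ [a,b]`,
then the sequence `{f(v(n))}` has a continuous `ν`-distribution function. -/
theorem stmt8 {M : Type*} [MetricSpace M] [CompactSpace M]
    [MeasurableSpace M] [BorelSpace M]
    (P : Measure M) [IsProbabilityMeasure P]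
    (e : ℕ → M) (he : Function.Injective e) (hd : DenseRange e)
    (a b : ℝ) (hab : a < b)
    (g : M → ℝ) (hg : Continuous g) (hgmem : ∀ α : M, g α ∈ Set.Icc a b)
    (F : StieltjesFunction ℝ) (hFcont : Continuous F)
    (hFdist : ∀ x : ℝ,
      P (closure (e '' {n : ℕ | g (e n) < x})) +
          P (closure (e '' {n : ℕ | g (e n) < x}ᶜ)) = 1 ∧
        (P (closure (e '' {n : ℕ | g (e n) < x}))).toReal = F x)
    (hFac : F.measure ≪ volume)
    (f : ℝ → ℝ) (hf : ContinuousOn f (Set.Icc a b))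
    (hfmem : ∀ x ∈ Set.Icc a b, f x ∈ Set.Icc a b)
    (hfib : ∀ x : ℝ, volume (f ⁻¹' {x} ∩ Set.Icc a b) = 0) :
    ∃ G : ℝ → ℝ, Continuous G ∧ ∀ x : ℝ,
      P (closure (e '' {n : ℕ | f (g (e n)) < x})) +
          P (closure (e '' {n : ℕ | f (g (e n)) < x}ᶜ)) = 1 ∧
        (P (closure (e '' {n : ℕ | f (g (e n)) < x}))).toReal = G x :=
  stmt8_general P e hd a b g hg hgmem F hFdist hFac f hf hfib
end

section
/- Let M be a compact metric space, e : ℕ → M an injective map with dense range, P a Borel probability measure on M, and g₁, …, g_k : M → ℝ continuous; set vᵢ(n) = gᵢ(e(n)) and suppose each vᵢ has a continuous ν-distribution function Fᵢ. If the sequences v₁, …, v_k are ν-independent, i.e. for all reals x₁, …, x_k the set ⋂ᵢ vᵢ⁻¹((−∞, xᵢ)) is ν*-measurable with ν(⋂ᵢ vᵢ⁻¹((−∞, xᵢ))) = ∏ᵢ ν(vᵢ⁻¹((−∞, xᵢ))), then the random variables g₁, …, g_k on (M, P) are independent: for all reals x₁, …, x_k, P(⋂ᵢ {gᵢ < xᵢ})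 = ∏ᵢ P({gᵢ < xᵢ}) = ∏ᵢ Fᵢ(xᵢ). -/
open MeasureTheory Filter Topology

/-- Let `g₁, …, g_k : M → ℝ` be continuous, `vᵢ(n) = gᵢ(e(n))`, each `vᵢ` having a
continuous `ν`-distribution function `Fᵢ`. If the `vᵢ` are `ν`-independent, then
the random variables `g₁, …, g_k` on `(M, P)` are independent:
`P(⋂ᵢ {gᵢ < xᵢ}) = ∏ᵢ P({gᵢ < xᵢ}) = ∏ᵢ Fᵢ(xᵢ)`. -/
theorem stmt9 {M : Type*} [MetricSpace M] [CompactSpace M]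
    [MeasurableSpace M] [BorelSpace M]
    (P : Measure M) [IsProbabilityMeasure P]
    (e : ℕ → M) (he : Function.Injective e) (hd : DenseRange e)
    (k : ℕ) (g : Fin k → M → ℝ) (hg : ∀ i, Continuous (g i))
    (F : Fin k → ℝ → ℝ) (hFcont : ∀ i, Continuous (F i))
    (hFdist : ∀ i, ∀ x : ℝ,
      P (closure (e '' {n : ℕ | g i (e n) < x})) +
          P (closure (e '' {n : ℕ | g i (e n) < x}ᶜ)) = 1 ∧
        (P (closure (e '' {n : ℕ | g i (e n) < x}))).toReal = F i x)
    (hind : ∀ x : Fin k → ℝ,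
      P (closure (e '' (⋂ i, {n : ℕ | g i (e n) < x i}))) +
          P (closure (e '' (⋂ i, {n : ℕ | g i (e n) < x i})ᶜ)) = 1 ∧
        (P (closure (e '' (⋂ i, {n : ℕ | g i (e n) < x i})))).toReal =
          ∏ i, (P (closure (e '' {n : ℕ | g i (e n) < x i}))).toReal) :
    ∀ x : Fin k → ℝ,
      (P (⋂ i, {α : M | g i α < x i})).toReal =
          ∏ i, (P {α : M | g i α < x i}).toReal ∧
        (∏ i, (P {α : M | g i α < x i}).toReal) = ∏ i, F i (x i) := by
  -- key limit lemma
  have key : ∀ (A : Set M) (L : ℝ) (C : ℕ → Set M) (φ : ℕ → ℝ),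
      Monotone C → (⋃ m, C m) = A → (∀ m, φ m ≤ (P (C m)).toReal) →
      Tendsto φ atTop (𝓝 L) → (P A).toReal ≤ L → (P A).toReal = L := by
    intro A L C φ hC hUnion hφ hφL hAL
    refine le_antisymm hAL ?_
    have ht : Tendsto (fun m => P (C m)) atTop (𝓝 (P A)) := by
      rw [← hUnion]; exact tendsto_measure_iUnion_atTop hC
    have ht' : Tendsto (fun m => (P (C m)).toReal) atTop (𝓝 (P A).toReal) :=
      (ENNReal.tendsto_toReal (measure_ne_top P A)).comp ht
    exact le_of_tendsto_of_tendsto' hφL ht' hφ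
  have hlim : Tendsto (fun m : ℕ => (1 : ℝ) / (m + 1)) atTop (𝓝 0) :=
    tendsto_one_div_add_atTop_nhds_zero_nat
  -- upper bound (single): P{g<x} ≤ F x
  have h1 : ∀ i (x : ℝ), (P {α : M | g i α < x}).toReal ≤ F i x := by
    intro i x
    rw [← (hFdist i x).2]
    refine ENNReal.toReal_mono (measure_ne_top _ _) (measure_mono ?_)
    have heq : {n : ℕ | g i (e n) < x} = e ⁻¹' {α : M | g i α < x} := rfl
    rw [heq]
    exact hd.subset_closure_image_preimage_of_isOpen
      (isOpen_lt (hg i) continuous_const)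
  -- lower bound (single): F x ≤ P{g≤x}
  have h2 : ∀ i (x : ℝ), F i x ≤ (P {α : M | g i α ≤ x}).toReal := by
    intro i x
    rw [← (hFdist i x).2]
    refine ENNReal.toReal_mono (measure_ne_top _ _) (measure_mono ?_)
    refine closure_minimal ?_ (isClosed_le (hg i) continuous_const)
    rintro _ ⟨n, hn, rfl⟩
    exact le_of_lt (show g i (e n) < x from hn)
  -- single-variable distribution
  have single : ∀ i (x : ℝ), (P {α : M | g i α < x}).toReal = F i x := by
    intro i x
    refine key _ _ (fun m => {α : M | g i α ≤ x - 1 / (m + 1)})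
      (fun m => F i (x - 1 / (m + 1))) ?_ ?_ (fun m => h2 i _) ?_ (h1 i x)
    · intro a b hab α hα
      simp only [Set.mem_setOf_eq] at hα ⊢
      have h : (1 : ℝ) / (b + 1) ≤ 1 / (a + 1) := by
        apply one_div_le_one_div_of_le <;> [positivity; exact_mod_cast by omega]
      linarith
    · ext α
      simp only [Set.mem_iUnion, Set.mem_setOf_eq]
      constructor
      · rintro ⟨m, hm⟩
        have : (0 : ℝ) < 1 / (m + 1) := by positivity
        linarith
      · intro hα
        obtain ⟨m, hm⟩ := exists_nat_one_div_lt (sub_pos.mpr hα)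
        exact ⟨m, by linarith⟩
    · have : Tendsto (fun m : ℕ => x - 1 / (m + 1)) atTop (𝓝 x) := by
        simpa using tendsto_const_nhds.sub hlim
      exact ((hFcont i).tendsto x).comp this
  intro x
  -- upper bound (joint)
  have h3 : (P (⋂ i, {α : M | g i α < x i})).toReal ≤ ∏ i, F i (x i) := by
    have := (hind x).2
    rw [show (∏ i, (P (closure (e '' {n : ℕ | g i (e n) < x i}))).toReal)
        = ∏ i, F i (x i) from Finset.prod_congr rfl fun i _ => (hFdist i (x i)).2]
      at this
    rw [← this]
    refine ENNReal.toReal_mono (measure_ne_top _ _) (measure_mono ?_)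
    have heq : (⋂ i, {n : ℕ | g i (e n) < x i})
        = e ⁻¹' (⋂ i, {α : M | g i α < x i}) := by
      ext n; simp
    rw [heq]
    exact hd.subset_closure_image_preimage_of_isOpen
      (isOpen_iInter_of_finite fun i => isOpen_lt (hg i) continuous_const)
  -- lower bound (joint): ∏ F ≤ P(⋂ {g ≤ y})
  have h4 : ∀ y : Fin k → ℝ,
      ∏ i, F i (y i) ≤ (P (⋂ i, {α : M | g i α ≤ y i})).toReal := by
    intro y
    have := (hind y).2
    rw [show (∏ i, (P (closure (e '' {n : ℕ | g i (e n) < y i}))).toReal)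
        = ∏ i, F i (y i) from Finset.prod_congr rfl fun i _ => (hFdist i (y i)).2]
      at this
    rw [← this]
    refine ENNReal.toReal_mono (measure_ne_top _ _) (measure_mono ?_)
    refine closure_minimal ?_
      (isClosed_iInter fun i => isClosed_le (hg i) continuous_const)
    rintro _ ⟨n, hn, rfl⟩
    simp only [Set.mem_iInter, Set.mem_setOf_eq] at hn ⊢
    exact fun i => le_of_lt (hn i)
  have joint : (P (⋂ i, {α : M | g i α < x i})).toReal = ∏ i, F i (x i) := by
    refine key _ _ (fun m => ⋂ i, {α : M | g i α ≤ x i - 1 / (m + 1)})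
      (fun m => ∏ i, F i (x i - 1 / (m + 1)))
      ?_ ?_ (fun m => h4 _) ?_ h3
    · intro a b hab
      refine Set.iInter_mono fun i => fun α hα => ?_
      simp only [Set.mem_setOf_eq] at hα ⊢
      have h : (1 : ℝ) / (b + 1) ≤ 1 / (a + 1) := by
        apply one_div_le_one_div_of_le <;> [positivity; exact_mod_cast by omega]
      linarith
    · ext α
      simp only [Set.mem_iUnion, Set.mem_iInter, Set.mem_setOf_eq]
      constructor
      · rintro ⟨m, hm⟩ i
        have := hm i
        have : (0 : ℝ) < 1 / (m + 1) := by positivity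
        have := hm i
        linarith
      · intro hα
        rcases isEmpty_or_nonempty (Fin k) with hk | hk
        · exact ⟨0, fun i => (hk.false i).elim⟩
        · obtain ⟨j, hj⟩ := Finite.exists_min fun i => x i - g i α
          have hpos : 0 < x j - g j α := sub_pos.mpr (hα j)
          obtain ⟨m, hm⟩ := exists_nat_one_div_lt hpos
          exact ⟨m, fun i => by have := hj i; linarith⟩
    · refine tendsto_finset_prod _ fun i _ => ?_
      have : Tendsto (fun m : ℕ => x i - 1 / (m + 1)) atTop (𝓝 (x i)) := by
        simpa using tendsto_const_nhds.sub hlim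
      exact ((hFcont i).tendsto (x i)).comp this
  refine ⟨?_, Finset.prod_congr rfl fun i _ => single i (x i)⟩
  rw [joint]
  exact Finset.prod_congr rfl fun i _ => (single i (x i)).symm
end

section
/- Let M be a compact metric space, e : ℕ → M an injective map with dense range, and P a natural measure on M. Then for every S ⊆ ℕ, the upper asymptotic density satisfies d̄(S) ≤ ν*(S) = P(cl(e(S))). -/
open Filter MeasureTheory
open scoped Classical

/-! Test the closure of `e(S)` against the thickened indicators of radius `1/(k+1)`: each of them
is continuous, nonnegative and equal to `1` on `e(S)`, so by equidistribution its `P`-integral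
bounds `d̄(S)` from above, and these integrals converge to `P(cl(e(S)))`. -/

/-- `E_N(𝟙_A) = |A ∩ [1,N]| / N`. -/
noncomputable def densSeq (A : Set ℕ) : ℕ → ℝ := fun N =>
  (((Finset.Icc 1 N).filter (fun n => n ∈ A)).card : ℝ) / N

/-- The upper asymptotic density `d̄(A) = limsup_{N→∞} |A ∩ [1,N]| / N`. -/
noncomputable def upperDens (A : Set ℕ) : ℝ := limsup (densSeq A) atTop

/-- `P` is a natural measure (w.r.t. the dense embedding `e : ℕ → M`) if the
sequence `(e(n))` is `P`-uniformly distributed in `M` and every nonempty open set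
has positive measure. -/
def IsNaturalMeasure {M : Type*} [MetricSpace M] [MeasurableSpace M]
    (e : ℕ → M) (P : Measure M) : Prop :=
  (∀ f : M → ℝ, Continuous f →
    Tendsto (fun N : ℕ => (∑ n ∈ Finset.Icc 1 N, f (e n)) / N) atTop
      (nhds (∫ α, f α ∂P))) ∧
  (∀ U : Set M, IsOpen U → U.Nonempty → 0 < P U)

theorem densSeq_le_average {A : Set ℕ} {g : ℕ → ℝ} (hg_nonneg : ∀ n, 0 ≤ g n)
    (hg_one : ∀ n ∈ A, 1 ≤ g n) (N : ℕ) :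
    densSeq A N ≤ (∑ n ∈ Finset.Icc 1 N, g n) / N := by
  refine div_le_div_of_nonneg_right ?_ N.cast_nonneg
  calc (((Finset.Icc 1 N).filter (· ∈ A)).card : ℝ)
      = ∑ n ∈ (Finset.Icc 1 N).filter (· ∈ A), (1 : ℝ) := by simp
    _ ≤ ∑ n ∈ (Finset.Icc 1 N).filter (· ∈ A), g n :=
        Finset.sum_le_sum fun n hn => hg_one n (Finset.mem_filter.mp hn).2
    _ ≤ ∑ n ∈ Finset.Icc 1 N, g n :=
        Finset.sum_le_sum_of_subset_of_nonneg (Finset.filter_subset _ _)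
          fun n _ _ => hg_nonneg n

theorem upperDens_le_of_tendsto_average {A : Set ℕ} {g : ℕ → ℝ} {L : ℝ}
    (hg_nonneg : ∀ n, 0 ≤ g n) (hg_one : ∀ n ∈ A, 1 ≤ g n)
    (hg : Tendsto (fun N : ℕ => (∑ n ∈ Finset.Icc 1 N, g n) / N) atTop (nhds L)) :
    upperDens A ≤ L := by
  have h_cobdd : IsCoboundedUnder (· ≤ ·) atTop (densSeq A) :=
    (isBoundedUnder_of ⟨0, fun N => by unfold densSeq; positivity⟩).isCoboundedUnder_le
  calc upperDens A ≤ limsup (fun N : ℕ => (∑ n ∈ Finset.Icc 1 N, g n) / N) atTop :=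
        limsup_le_limsup (.of_forall (densSeq_le_average hg_nonneg hg_one)) h_cobdd
          hg.isBoundedUnder_le
    _ = L := hg.limsup_eq

theorem stmt10_general {M : Type*} [MetricSpace M]
    [MeasurableSpace M] [BorelSpace M]
    (P : Measure M) [IsProbabilityMeasure P]
    (e : ℕ → M)
    (hP : IsNaturalMeasure e P) (S : Set ℕ) :
    upperDens S ≤ (P (closure (e '' S))).toReal := by
  set C := closure (e '' S)
  have hδ (k : ℕ) : 0 < 1 / ((k : ℝ) + 1) := Nat.one_div_pos_of_nat
  have h_bound (k : ℕ) : upperDens S ≤ ∫ x, (thickenedIndicator (hδ k) C x : ℝ) ∂P :=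
    upperDens_le_of_tendsto_average (fun _ => NNReal.coe_nonneg _)
      (fun n hn => (thickenedIndicator_one (hδ k) C
        (subset_closure (Set.mem_image_of_mem e hn))).ge)
      (hP.1 _ (NNReal.continuous_coe.comp (thickenedIndicator (hδ k) C).continuous))
  exact ge_of_tendsto' (tendsto_integral_thickenedIndicator_of_isClosed P isClosed_closure hδ
    tendsto_one_div_add_atTop_nhds_zero_nat) h_bound

/-- For a natural measure `P`, the upper asymptotic density of any `S ⊆ ℕ`
is at most its measure density `ν*(S) = P(cl(e(S)))`. -/
theorem stmt10 {M : Type*} [MetricSpace M] [CompactSpace M]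
    [MeasurableSpace M] [BorelSpace M]
    (P : Measure M) [IsProbabilityMeasure P]
    (e : ℕ → M) (he : Function.Injective e) (hd : DenseRange e)
    (hP : IsNaturalMeasure e P) (S : Set ℕ) :
    upperDens S ≤ (P (closure (e '' S))).toReal :=
  stmt10_general P e hP S
end

section
/- Let M be a compact metric space, e : ℕ → M an injective map with dense range, P a natural measure on M, and g : M → ℝ continuous; set v(n) = g(e(n)). Let F : ℝ → ℝ be a continuous function. Then the following are equivalent: (a) F is the asymptotic distribution function of v, i.e. for every real x the set {n : v(n) < x} has asymptotic density F(x); (b) F is the distribution function of the random variable g on (M, P), i.e. P({g < x}) = F(x) for every real x. -/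
/-!
The empirical measures of the points `e 1, …, e N` converge weakly to `P`, so by the portmanteau
theorem `{n | g (e n) < x}` has density `P {g < x}` as soon as the frontier `{g = x}` of
`{g < x}` is `P`-null. Only countably many levels `{g = t}` carry mass, so under (a) the
monotone function `x ↦ P {g < x}` agrees with the continuous `F` on a dense set, hence everywhere.
Under (b), `P {g ≤ x} ≤ P {g < y} = F y` for `y > x`, and letting `y ↓ x` gives `P {g = x} = 0`.
-/

open Filter MeasureTheory
open scoped Classical

open Set Topology
open scoped ENNReal BoundedContinuousFunction Finset

theorem Monotone.eq_of_eqOn_dense {α β : Type*} [TopologicalSpace α] [LinearOrder α]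
    [OrderTopology α] [DenselyOrdered α] [NoMinOrder α] [NoMaxOrder α]
    [TopologicalSpace β] [LinearOrder β] [OrderClosedTopology β]
    {f g : α → β} (hf : Monotone f) (hg : Continuous g) {s : Set α} (hs : Dense s)
    (hfg : EqOn f g s) : f = g := by
  funext x
  have hneBot : ∀ t : Set α, IsOpen t → x ∈ closure t → (𝓝[t ∩ s] x).NeBot := fun t ht hx =>
    mem_closure_iff_nhdsWithin_neBot.1 <|
      closure_minimal (hs.open_subset_closure_inter ht) isClosed_closure hx
  have hg' : ∀ t : Set α, Tendsto g (𝓝[t ∩ s] x) (𝓝 (g x)) := fun t =>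
    hg.continuousWithinAt
  apply le_antisymm
  · have := hneBot (Ioi x) isOpen_Ioi (by simp)
    refine _root_.ge_of_tendsto (hg' (Ioi x)) (eventually_nhdsWithin_of_forall fun y hy => ?_)
    exact (hf (le_of_lt hy.1)).trans_eq (hfg hy.2)
  · have := hneBot (Iio x) isOpen_Iio (by simp)
    refine _root_.le_of_tendsto (hg' (Iio x)) (eventually_nhdsWithin_of_forall fun y hy => ?_)
    exact (hfg hy.2).symm.trans_le (hf (le_of_lt hy.1))

section DistributionFunction

variable {α : Type*} [MeasurableSpace α] {μ : Measure α} {g : α → ℝ}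

theorem monotone_measureReal_lt [IsFiniteMeasure μ] : Monotone fun x => μ.real {a | g a < x} :=
  fun _ _ hxy => measureReal_mono fun _ ha => lt_of_lt_of_le ha hxy

theorem measure_eq_zero_of_continuousWithinAt_measureReal_lt [IsFiniteMeasure μ]
    (hg : Measurable g) {x : ℝ}
    (h : ContinuousWithinAt (fun y => μ.real {a | g a < y}) (Ioi x) x) :
    μ {a | g a = x} = 0 := by
  have hle : μ.real {a | g a ≤ x} ≤ μ.real {a | g a < x} :=
    ge_of_tendsto h (eventually_nhdsWithin_of_forall fun y (hy : x < y) =>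
      measureReal_mono fun a (ha : g a ≤ x) => ha.trans_lt hy)
  have hsplit : μ.real {a | g a ≤ x} = μ.real {a | g a < x} + μ.real {a | g a = x} := by
    rw [← measureReal_union]
    · congr 1; ext a; exact le_iff_lt_or_eq (a := g a)
    · exact disjoint_left.2 fun a (h1 : g a < x) (h2 : g a = x) => h1.ne h2
    · exact hg (measurableSet_singleton x)
  exact (measureReal_eq_zero_iff (μ := μ)).1 (le_antisymm (by linarith) measureReal_nonneg)

end DistributionFunction

section Empirical

variable {Ω : Type*} [MeasurableSpace Ω]

noncomputable def empiricalMeasure (e : ℕ → Ω) (N : ℕ) : Measure Ω :=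
  (N : ℝ≥0∞)⁻¹ • ∑ n ∈ Finset.Icc 1 N, Measure.dirac (e n)

theorem empiricalMeasure_apply (e : ℕ → Ω) (N : ℕ) {s : Set Ω} (hs : MeasurableSet s) :
    empiricalMeasure e N s = (N : ℝ≥0∞)⁻¹ * #{n ∈ Finset.Icc 1 N | e n ∈ s} := by
  simp [empiricalMeasure, Measure.finsetSum_apply, Measure.dirac_apply' _ hs, Set.indicator_apply,
    Finset.sum_boole]

theorem empiricalMeasure_real_apply (e : ℕ → Ω) (N : ℕ) {s : Set Ω} (hs : MeasurableSet s) :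
    (empiricalMeasure e N).real s = densSeq {n | e n ∈ s} N := by
  simp [Measure.real, empiricalMeasure_apply e N hs, densSeq, div_eq_inv_mul]

instance (e : ℕ → Ω) (N : ℕ) : IsProbabilityMeasure (empiricalMeasure e (N + 1)) := by
  constructor
  rw [empiricalMeasure_apply e _ MeasurableSet.univ]
  simp [ENNReal.inv_mul_cancel]

theorem integral_empiricalMeasure [TopologicalSpace Ω] [OpensMeasurableSpace Ω] (e : ℕ → Ω)
    (N : ℕ) (f : Ω →ᵇ ℝ) :
    ∫ x, f x ∂empiricalMeasure e N = (∑ n ∈ Finset.Icc 1 N, f (e n)) / N := by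
  rw [empiricalMeasure, integral_smul_measure, integral_finsetSum_measure fun _ _ => f.integrable _]
  simp [integral_dirac' _ _ f.continuous.stronglyMeasurable, div_eq_inv_mul]

/-- The empirical measure of the first `N + 1` points, so that it is a probability measure for
every `N`. -/
noncomputable def empiricalProbabilityMeasure (e : ℕ → Ω) (N : ℕ) : ProbabilityMeasure Ω :=
  ⟨empiricalMeasure e (N + 1), inferInstance⟩

variable [TopologicalSpace Ω] [OpensMeasurableSpace Ω]

theorem tendsto_empiricalProbabilityMeasure {e : ℕ → Ω} {P : ProbabilityMeasure Ω}
    (he : ∀ f : Ω →ᵇ ℝ, Tendsto (fun N : ℕ => (∑ n ∈ Finset.Icc 1 N, f (e n)) / N) atTop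
      (𝓝 (∫ x, f x ∂P))) :
    Tendsto (empiricalProbabilityMeasure e) atTop (𝓝 P) := by
  refine ProbabilityMeasure.tendsto_iff_forall_integral_tendsto.2 fun f => ?_
  simp only [empiricalProbabilityMeasure, ProbabilityMeasure.coe_mk, integral_empiricalMeasure]
  exact_mod_cast (tendsto_add_atTop_iff_nat 1).2 (he f)

theorem tendsto_densSeq_of_measure_frontier_eq_zero [HasOuterApproxClosed Ω] {e : ℕ → Ω}
    {P : Measure Ω} [IsProbabilityMeasure P]
    (he : ∀ f : Ω →ᵇ ℝ, Tendsto (fun N : ℕ => (∑ n ∈ Finset.Icc 1 N, f (e n)) / N) atTop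
      (𝓝 (∫ x, f x ∂P)))
    {s : Set Ω} (hs : MeasurableSet s) (hs₀ : P (frontier s) = 0) :
    Tendsto (densSeq {n | e n ∈ s}) atTop (𝓝 (P.real s)) := by
  have := ProbabilityMeasure.tendsto_measure_of_null_frontier_of_tendsto'
    (tendsto_empiricalProbabilityMeasure (P := ⟨P, inferInstance⟩) he) hs₀
  rw [← tendsto_add_atTop_iff_nat 1]
  simp only [← empiricalMeasure_real_apply e _ hs]
  exact (ENNReal.tendsto_toReal (measure_ne_top P s)).comp this

end Empirical

theorem stmt12_general {M : Type*} [MetricSpace M]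
    [MeasurableSpace M] [BorelSpace M]
    (P : Measure M) [IsProbabilityMeasure P]
    (e : ℕ → M)
    (hP : IsNaturalMeasure e P)
    (g : M → ℝ) (hg : Continuous g) (F : ℝ → ℝ) (hF : Continuous F) :
    (∀ x : ℝ, Tendsto (densSeq {n : ℕ | g (e n) < x}) atTop (nhds (F x))) ↔
      (∀ x : ℝ, (P {α : M | g α < x}).toReal = F x) := by
  have hlim : ∀ x, P {α | g α = x} = 0 →
      Tendsto (densSeq {n | g (e n) < x}) atTop (𝓝 (P.real {α | g α < x})) := fun x hx =>
    tendsto_densSeq_of_measure_frontier_eq_zero (s := {α | g α < x})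
      (fun f => hP.1 f f.continuous) (isOpen_lt hg continuous_const).measurableSet
      (measure_mono_null (frontier_lt_subset_eq hg continuous_const) hx)
  constructor
  · intro hdens
    have hatoms := Measure.countable_meas_level_set_pos (μ := P) hg.measurable
    have hagree : EqOn (fun x => P.real {α | g α < x}) F {t | 0 < P {α | g α = t}}ᶜ :=
      fun x hx => tendsto_nhds_unique (hlim x (by simpa using hx)) (hdens x)
    exact congrFun (monotone_measureReal_lt.eq_of_eqOn_dense hF (hatoms.dense_compl ℝ) hagree)
  · intro hdist x
    replace hdist : (fun y => P.real {α | g α < y}) = F := funext hdist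
    have hcont : ContinuousWithinAt (fun y => P.real {α | g α < y}) (Ioi x) x :=
      hdist ▸ hF.continuousWithinAt
    simpa only [congrFun hdist x] using
      hlim x (measure_eq_zero_of_continuousWithinAt_measureReal_lt hg.measurable hcont)

/-- Let `g : M → ℝ` be continuous, `v(n) = g(e(n))`, `P` a natural measure and
`F : ℝ → ℝ` continuous. Then `F` is the asymptotic distribution function of `v`
(for every `x`, `{n | v(n) < x}` has asymptotic density `F(x)`) if and only if
`F` is the distribution function of the random variable `g` on `(M, P)`
(`P({g < x}) = F(x)` for every `x`). -/
theorem stmt12 {M : Type*} [MetricSpace M] [CompactSpace M]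
    [MeasurableSpace M] [BorelSpace M]
    (P : Measure M) [IsProbabilityMeasure P]
    (e : ℕ → M) (he : Function.Injective e) (hd : DenseRange e)
    (hP : IsNaturalMeasure e P)
    (g : M → ℝ) (hg : Continuous g) (F : ℝ → ℝ) (hF : Continuous F) :
    (∀ x : ℝ, Tendsto (densSeq {n : ℕ | g (e n) < x}) atTop (nhds (F x))) ↔
      (∀ x : ℝ, (P {α : M | g α < x}).toReal = F x) :=
  stmt12_general P e hP g hg F hF
end

section
/- Let M be a compact metric space, e : ℕ → M an injective map with dense range, P a natural measure on M, and g, h : M → [0,1] continuous; set u(n) = g(e(n)) and v(n) = h(e(n)). Then u(n) = v(n) for all n ∈ ℕ if and only if ∫ g dP = ∫ h dP, ∫ g² dP = ∫ h² dP and ∫ gh dP = ∫ h² dP (equivalently, E(u) = E(v), E(u²) = E(v²) and E(uv) = E(v²), where E(w) = lim_{N→∞} (1/N)∑_{n=1}^N w(n)). -/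
open Filter MeasureTheory

/-- Let `g, h : M → [0,1]` be continuous, `u(n) = g(e(n))`, `v(n) = h(e(n))`, and
`P` a natural measure. Then `u = v` if and only if `∫ g dP = ∫ h dP`,
`∫ g² dP = ∫ h² dP` and `∫ gh dP = ∫ h² dP`. -/
theorem stmt15 {M : Type*} [MetricSpace M] [CompactSpace M]
    [MeasurableSpace M] [BorelSpace M]
    (P : Measure M) [IsProbabilityMeasure P]
    (e : ℕ → M) (he : Function.Injective e) (hd : DenseRange e)
    (hP : IsNaturalMeasure e P)
    (g h : M → ℝ) (hg : Continuous g) (hh : Continuous h)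
    (hgmem : ∀ α : M, g α ∈ Set.Icc (0 : ℝ) 1)
    (hhmem : ∀ α : M, h α ∈ Set.Icc (0 : ℝ) 1) :
    (∀ n : ℕ, g (e n) = h (e n)) ↔
      ((∫ α, g α ∂P) = ∫ α, h α ∂P ∧
        (∫ α, (g α) ^ 2 ∂P) = ∫ α, (h α) ^ 2 ∂P ∧
        (∫ α, g α * h α ∂P) = ∫ α, (h α) ^ 2 ∂P) := by
  constructor
  · intro hn
    have hgh : g = h := by
      have : Set.EqOn g h (Set.range e) := by
        rintro x ⟨n, rfl⟩; exact hn n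
      exact Continuous.ext_on hd hg hh this
    subst hgh
    exact ⟨rfl, rfl, by simp [sq]⟩
  · rintro ⟨h1, h2, h3⟩ n
    -- show g = h using ∫ (g-h)^2 = 0
    have hf : Continuous (fun α => (g α - h α) ^ 2) := by continuity
    have hif : Integrable (fun α => (g α - h α) ^ 2) P :=
      hf.integrable_of_hasCompactSupport (HasCompactSupport.of_compactSpace _)
    have hi1 : Integrable (fun α => (g α) ^ 2) P :=
      (hg.pow 2).integrable_of_hasCompactSupport (HasCompactSupport.of_compactSpace _)
    have hi2 : Integrable (fun α => (h α) ^ 2) P :=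
      (hh.pow 2).integrable_of_hasCompactSupport (HasCompactSupport.of_compactSpace _)
    have hi3 : Integrable (fun α => g α * h α) P :=
      (hg.mul hh).integrable_of_hasCompactSupport (HasCompactSupport.of_compactSpace _)
    have key : (∫ α, (g α - h α) ^ 2 ∂P) = 0 := by
      have expand : (fun α => (g α - h α) ^ 2)
          = fun α => (g α) ^ 2 - (2 * (g α * h α) - (h α) ^ 2) := by
        funext α; ring
      have e1 : (∫ α, (g α - h α) ^ 2 ∂P)
          = (∫ α, (g α) ^ 2 ∂P) - ∫ α, 2 * (g α * h α) - (h α) ^ 2 ∂P := by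
        rw [expand]; exact integral_sub hi1 ((hi3.const_mul 2).sub hi2)
      have e2 : (∫ α, 2 * (g α * h α) - (h α) ^ 2 ∂P)
          = (∫ α, 2 * (g α * h α) ∂P) - ∫ α, (h α) ^ 2 ∂P :=
        integral_sub (hi3.const_mul 2) hi2
      rw [e1, e2, integral_const_mul, h2, h3]
      ring
    have hzero : ∀ x, (g x - h x) ^ 2 = 0 := by
      by_contra hc
      push_neg at hc
      obtain ⟨x, hx⟩ := hc
      have hxpos : 0 < (g x - h x) ^ 2 := lt_of_le_of_ne (sq_nonneg _) (Ne.symm hx)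
      set U : Set M := {y | (g y - h y) ^ 2 > (g x - h x) ^ 2 / 2} with hU
      have hUopen : IsOpen U := isOpen_lt continuous_const hf
      have hUne : U.Nonempty := ⟨x, by simp [hU]; linarith⟩
      have hUpos : 0 < P U := hP.2 U hUopen hUne
      have hae : (fun α => (g α - h α) ^ 2) =ᵐ[P] 0 :=
        (integral_eq_zero_iff_of_nonneg (fun α => sq_nonneg _) hif).mp key
      have : P U = 0 := by
        have hsub : U ⊆ {α | ¬ (fun α => (g α - h α) ^ 2) α = (0 : M → ℝ) α} := by
          intro y hy
          have hy' : (g y - h y) ^ 2 > (g x - h x) ^ 2 / 2 := hy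
          simp only [Set.mem_setOf_eq]
          intro h0
          simp only [Pi.zero_apply] at h0
          rw [h0] at hy'
          linarith
        exact measure_mono_null hsub hae
      exact hUpos.ne' this
    have := hzero (e n)
    have : g (e n) - h (e n) = 0 := by
      exact pow_eq_zero_iff (n := 2) (by norm_num) |>.mp this
    linarith
end

section
/- Let a < b be reals, let v : ℕ → [a,b] be a sequence with continuous asymptotic distribution function (i.e. for every real x the set {n : v(n) < x} has asymptotic density, and the resulting function of x is continuous), and let f : [a,b] → ℝ be a continuous function for which there exists a partition a = a₀ < a₁ < … < a_m = b such that f is strictly monotone on each interval [aᵢ, aᵢ₊₁], i = 0, …, m−1. Then the sequence {f(v(n))} also has a continuous asymptotic distribution function. -/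
open Filter

open scoped Classical

noncomputable def cfilter (A : Set ℕ) (N : ℕ) : Finset ℕ :=
  @Finset.filter ℕ (fun n => n ∈ A) (fun _ => Classical.propDecidable _) (Finset.Icc 1 N)

lemma densSeq_eq (A : Set ℕ) (N : ℕ) : densSeq A N = ((cfilter A N).card : ℝ) / N := rfl

lemma mem_cfilter {A : Set ℕ} {N n : ℕ} : n ∈ cfilter A N ↔ n ∈ Finset.Icc 1 N ∧ n ∈ A :=
  Finset.mem_filter

lemma densSeq_nonneg (A : Set ℕ) (N : ℕ) : 0 ≤ densSeq A N := by
  rw [densSeq_eq]; positivity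

lemma densSeq_le_one (A : Set ℕ) (N : ℕ) : densSeq A N ≤ 1 := by
  rw [densSeq_eq]
  rcases Nat.eq_zero_or_pos N with h | h
  · simp [h]
  · rw [div_le_one (by exact_mod_cast h)]
    have h1 : (cfilter A N).card ≤ (Finset.Icc 1 N).card := Finset.card_filter_le _ _
    have h2 : (Finset.Icc 1 N).card = N := by simp
    exact_mod_cast h1.trans_eq h2

lemma cfilter_subset {A B : Set ℕ} (h : A ⊆ B) (N : ℕ) : cfilter A N ⊆ cfilter B N := by
  intro n hn
  rw [mem_cfilter] at hn ⊢
  exact ⟨hn.1, h hn.2⟩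

lemma densSeq_mono {A B : Set ℕ} (h : A ⊆ B) (N : ℕ) : densSeq A N ≤ densSeq B N := by
  rw [densSeq_eq, densSeq_eq]
  gcongr
  exact cfilter_subset h N

lemma densSeq_empty (N : ℕ) : densSeq (∅ : Set ℕ) N = 0 := by
  rw [densSeq_eq]
  have : cfilter (∅ : Set ℕ) N = ∅ := by
    ext n; simp [mem_cfilter]
  simp [this]

lemma densSeq_congr {A B : Set ℕ} (h : A = B) : densSeq A = densSeq B := by rw [h]

lemma densSeq_diff {A B : Set ℕ} (h : A ⊆ B) (N : ℕ) :
    densSeq (B \ A) N = densSeq B N - densSeq A N := by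
  rw [densSeq_eq, densSeq_eq, densSeq_eq, ← sub_div]
  congr 1
  have hsub := cfilter_subset h N
  have hset : cfilter (B \ A) N = cfilter B N \ cfilter A N := by
    ext n
    simp only [mem_cfilter, Finset.mem_sdiff, Set.mem_diff]
    tauto
  rw [hset, Finset.card_sdiff_of_subset hsub]
  have := Finset.card_le_card hsub
  push_cast [Nat.cast_sub this]
  ring

lemma densSeq_union {A B : Set ℕ} (h : Disjoint A B) (N : ℕ) :
    densSeq (A ∪ B) N = densSeq A N + densSeq B N := by
  rw [densSeq_eq, densSeq_eq, densSeq_eq, ← add_div]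
  congr 1
  have hset : cfilter (A ∪ B) N = cfilter A N ∪ cfilter B N := by
    ext n
    simp only [mem_cfilter, Finset.mem_union, Set.mem_union]
    tauto
  rw [hset, Finset.card_union_of_disjoint]
  · push_cast; ring
  · rw [Finset.disjoint_left]
    intro n hn hn'
    rw [mem_cfilter] at hn hn'
    exact Set.disjoint_left.1 h hn.2 hn'.2

lemma densSeq_union_le (A B : Set ℕ) (N : ℕ) :
    densSeq (A ∪ B) N ≤ densSeq A N + densSeq B N := by
  rw [densSeq_eq, densSeq_eq, densSeq_eq, ← add_div]
  rcases Nat.eq_zero_or_pos N with h | h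
  · simp [h]
  · gcongr
    have hset : cfilter (A ∪ B) N ⊆ cfilter A N ∪ cfilter B N := by
      intro n hn
      rw [mem_cfilter] at hn
      rcases hn.2 with hh | hh
      · exact Finset.mem_union_left _ (mem_cfilter.2 ⟨hn.1, hh⟩)
      · exact Finset.mem_union_right _ (mem_cfilter.2 ⟨hn.1, hh⟩)
    calc ((cfilter (A ∪ B) N).card : ℝ) ≤ ((cfilter A N ∪ cfilter B N).card : ℝ) := by
            exact_mod_cast Finset.card_le_card hset
      _ ≤ (cfilter A N).card + (cfilter B N).card := by
            exact_mod_cast Finset.card_union_le _ _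

lemma densSeq_biUnion (s : Finset ℕ) (A : ℕ → Set ℕ)
    (hd : ∀ i ∈ s, ∀ j ∈ s, i ≠ j → Disjoint (A i) (A j)) (N : ℕ) :
    densSeq (⋃ i ∈ s, A i) N = ∑ i ∈ s, densSeq (A i) N := by
  induction s using Finset.induction_on with
  | empty => simp [densSeq_empty]
  | @insert a s ha ih =>
      have hdisj : Disjoint (A a) (⋃ i ∈ s, A i) := by
        apply Set.disjoint_iUnion_right.2
        intro i
        apply Set.disjoint_iUnion_right.2
        intro hi
        exact hd a (Finset.mem_insert_self a s) i (Finset.mem_insert_of_mem hi)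
          (fun h => ha (h ▸ hi))
      have hU : (⋃ i ∈ insert a s, A i) = A a ∪ ⋃ i ∈ s, A i := by
        simp [Set.biUnion_insert]
      rw [densSeq_congr hU, densSeq_union hdisj, Finset.sum_insert ha,
        ih (fun i hi j hj hij => hd i (Finset.mem_insert_of_mem hi) j
          (Finset.mem_insert_of_mem hj) hij)]

section limits

variable {v : ℕ → ℝ} {F : ℝ → ℝ}

lemma tendsto_densSeq_le (hFcont : Continuous F)
    (hF : ∀ x : ℝ, Tendsto (densSeq {n : ℕ | v n < x}) atTop (nhds (F x))) (u : ℝ) :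
    Tendsto (densSeq {n : ℕ | v n ≤ u}) atTop (nhds (F u)) := by
  rw [Metric.tendsto_nhds]
  intro ε hε
  have hcont : ∀ᶠ w in nhds u, F w < F u + ε / 2 :=
    (hFcont.tendsto u).eventually (eventually_lt_nhds (by linarith))
  obtain ⟨w, hw1, hw2⟩ := ((eventually_nhdsWithin_of_eventually_nhds hcont).and
    (eventually_mem_nhdsWithin (s := Set.Ioi u))).exists
  have hVu : ∀ᶠ N in atTop, F u - ε < densSeq {n : ℕ | v n < u} N :=
    (hF u).eventually (eventually_gt_nhds (by linarith))
  have hVw : ∀ᶠ N in atTop, densSeq {n : ℕ | v n < w} N < F u + ε :=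
    (hF w).eventually (eventually_lt_nhds (by linarith))
  filter_upwards [hVu, hVw] with N h1 h2
  have hl : densSeq {n : ℕ | v n < u} N ≤ densSeq {n : ℕ | v n ≤ u} N :=
    densSeq_mono (Set.setOf_subset_setOf.mpr (fun n h => le_of_lt h)) N
  have hr : densSeq {n : ℕ | v n ≤ u} N ≤ densSeq {n : ℕ | v n < w} N :=
    densSeq_mono (Set.setOf_subset_setOf.mpr (fun n h => lt_of_le_of_lt h hw2)) N
  rw [Real.dist_eq, abs_sub_lt_iff]
  constructor <;> linarith

lemma tendsto_densSeq_singleton (hFcont : Continuous F)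
    (hF : ∀ x : ℝ, Tendsto (densSeq {n : ℕ | v n < x}) atTop (nhds (F x))) (u : ℝ) :
    Tendsto (densSeq {n : ℕ | v n = u}) atTop (nhds 0) := by
  have hsub : {n : ℕ | v n < u} ⊆ {n : ℕ | v n ≤ u} :=
    Set.setOf_subset_setOf.mpr (fun n h => le_of_lt h)
  have hset : {n : ℕ | v n = u} = {n : ℕ | v n ≤ u} \ {n : ℕ | v n < u} := by
    ext n; simp only [Set.mem_setOf_eq, Set.mem_diff]
    constructor
    · rintro rfl; exact ⟨le_rfl, lt_irrefl _⟩
    · rintro ⟨h1, h2⟩; exact le_antisymm h1 (not_lt.1 h2)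
  rw [densSeq_congr hset]
  have h0 := ((tendsto_densSeq_le hFcont hF u).sub (hF u))
  rw [sub_self] at h0
  exact h0.congr (fun N => (densSeq_diff hsub N).symm)

lemma tendsto_densSeq_Ico (hF : ∀ x : ℝ, Tendsto (densSeq {n : ℕ | v n < x}) atTop (nhds (F x)))
    {p w : ℝ} (hpw : p ≤ w) :
    Tendsto (densSeq {n : ℕ | v n ∈ Set.Ico p w}) atTop (nhds (F w - F p)) := by
  have hsub : {n : ℕ | v n < p} ⊆ {n : ℕ | v n < w} :=
    Set.setOf_subset_setOf.mpr (fun n h => lt_of_lt_of_le h hpw)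
  have hset : {n : ℕ | v n ∈ Set.Ico p w} = {n : ℕ | v n < w} \ {n : ℕ | v n < p} := by
    ext n
    simp only [Set.mem_setOf_eq, Set.mem_diff, Set.mem_Ico, not_lt]
    tauto
  rw [densSeq_congr hset]
  exact ((hF w).sub (hF p)).congr (fun N => (densSeq_diff hsub N).symm)

lemma tendsto_densSeq_Ioo (hFcont : Continuous F)
    (hF : ∀ x : ℝ, Tendsto (densSeq {n : ℕ | v n < x}) atTop (nhds (F x)))
    {p w : ℝ} (hpw : p < w) :
    Tendsto (densSeq {n : ℕ | v n ∈ Set.Ioo p w}) atTop (nhds (F w - F p)) := by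
  have hsub : {n : ℕ | v n ≤ p} ⊆ {n : ℕ | v n < w} :=
    Set.setOf_subset_setOf.mpr (fun n h => lt_of_le_of_lt h hpw)
  have hset : {n : ℕ | v n ∈ Set.Ioo p w} = {n : ℕ | v n < w} \ {n : ℕ | v n ≤ p} := by
    ext n
    simp only [Set.mem_setOf_eq, Set.mem_diff, Set.mem_Ioo, not_le]
    tauto
  rw [densSeq_congr hset]
  exact ((hF w).sub (tendsto_densSeq_le hFcont hF p)).congr
    (fun N => (densSeq_diff hsub N).symm)

end limits

lemma monotone_icc_continuous {t : ℝ → ℝ} {p q : ℝ} (hmono : Monotone t)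
    (hmem : ∀ x, t x ∈ Set.Icc p q) (hsurj : Set.Icc p q ⊆ Set.range t) :
    Continuous t := by
  rw [continuous_iff_continuousAt]
  intro a
  rw [continuousAt_iff_continuous_left_right]
  constructor
  · rcases eq_or_lt_of_le (hmem a).1 with h | h
    · refine (continuousWithinAt_const : ContinuousWithinAt (fun _ => t a) _ _).congr ?_ rfl
      intro z hz
      exact le_antisymm (hmono hz) (h ▸ (hmem z).1)
    · apply continuousWithinAt_left_of_monotoneOn_of_exists_between
        (hmono.monotoneOn Set.univ) (Filter.univ_mem)
      intro y hy
      obtain ⟨z, hz1, hz2⟩ := exists_between (max_lt hy h)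
      have hzmem : z ∈ Set.Icc p q :=
        ⟨(le_max_right y p).trans hz1.le, hz2.le.trans (hmem a).2⟩
      obtain ⟨cc, hcc⟩ := hsurj hzmem
      exact ⟨cc, trivial, hcc ▸ ⟨(le_max_left y p).trans_lt hz1, hcc ▸ hz2⟩⟩
  · rcases eq_or_lt_of_le (hmem a).2 with h | h
    · refine (continuousWithinAt_const : ContinuousWithinAt (fun _ => t a) _ _).congr ?_ rfl
      intro z hz
      exact le_antisymm (h ▸ (hmem z).2) (hmono hz)
    · apply continuousWithinAt_right_of_monotoneOn_of_exists_between
        (hmono.monotoneOn Set.univ) (Filter.univ_mem)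
      intro y hy
      obtain ⟨z, hz1, hz2⟩ := exists_between (lt_min hy h : t a < min y q)
      have hzmem : z ∈ Set.Icc p q :=
        ⟨(hmem a).1.trans hz1.le, hz2.le.trans (min_le_right y q)⟩
      obtain ⟨cc, hcc⟩ := hsurj hzmem
      exact ⟨cc, trivial, hcc ▸ hz1, hcc ▸ hz2.trans_le (min_le_left y q)⟩

noncomputable def tFun (f : ℝ → ℝ) (p q x : ℝ) : ℝ :=
  sSup (insert p {y ∈ Set.Icc p q | f y ≤ x})

section tFun

variable {f : ℝ → ℝ} {p q : ℝ}

lemma tFun_bddAbove (hpq : p ≤ q) (x : ℝ) : BddAbove (insert p {y ∈ Set.Icc p q | f y ≤ x}) := by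
  refine ⟨q, ?_⟩
  rintro z (rfl | hz)
  · exact hpq
  · exact hz.1.2

lemma tFun_mem (hpq : p ≤ q) (x : ℝ) : tFun f p q x ∈ Set.Icc p q := by
  constructor
  · exact le_csSup (tFun_bddAbove hpq x) (Set.mem_insert _ _)
  · apply csSup_le (Set.insert_nonempty _ _)
    rintro z (rfl | hz)
    · exact hpq
    · exact hz.1.2

lemma tFun_mono (hpq : p ≤ q) : Monotone (tFun f p q) := by
  intro x y hxy
  apply csSup_le_csSup (tFun_bddAbove hpq y) (Set.insert_nonempty _ _)
  apply Set.insert_subset_insert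
  intro z hz
  exact ⟨hz.1, hz.2.trans hxy⟩

lemma tFun_comp (hmono : StrictMonoOn f (Set.Icc p q)) {y : ℝ} (hy : y ∈ Set.Icc p q) :
    tFun f p q (f y) = y := by
  have hset : insert p {z ∈ Set.Icc p q | f z ≤ f y} = Set.Icc p y := by
    ext z
    constructor
    · rintro (rfl | hz)
      · exact ⟨le_rfl, hy.1⟩
      · refine ⟨hz.1.1, ?_⟩
        by_contra hzy
        exact absurd (hmono hy hz.1 (not_le.1 hzy)) (not_lt.2 hz.2)
    · intro hz
      right
      have hz' : z ∈ Set.Icc p q := ⟨hz.1, hz.2.trans hy.2⟩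
      exact ⟨hz', hmono.monotoneOn hz' hy hz.2⟩
  rw [tFun, hset, csSup_Icc hy.1]

lemma tFun_key (hpq : p ≤ q) (hcont : ContinuousOn f (Set.Icc p q)) (hmono : StrictMonoOn f (Set.Icc p q))
    (x y : ℝ) : (y ∈ Set.Ico p q ∧ f y < x) ↔ y ∈ Set.Ico p (tFun f p q x) := by
  constructor
  · rintro ⟨hy, hfy⟩
    refine ⟨hy.1, ?_⟩
    rcases le_or_gt x (f q) with hxq | hxq
    · -- IVT on [y, q]
      have hyq : y ≤ q := hy.2.le
      have hicc : Set.Icc y q ⊆ Set.Icc p q := Set.Icc_subset_Icc hy.1 le_rfl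
      have hx : x ∈ Set.Icc (f y) (f q) := ⟨hfy.le, hxq⟩
      obtain ⟨y', hy'mem, (hy' : f y' = x)⟩ := intermediate_value_Icc hyq (hcont.mono hicc) hx
      have hy'q : y' ∈ Set.Icc p q := hicc hy'mem
      have hle : y' ≤ tFun f p q x :=
        le_csSup (tFun_bddAbove hpq x) (Set.mem_insert_of_mem _ ⟨hy'q, hy'.le⟩)
      have hne : y ≠ y' := by
        rintro rfl
        rw [hy'] at hfy
        exact lt_irrefl x hfy
      exact (lt_of_le_of_ne hy'mem.1 hne).trans_le hle
    · -- x > f q : q is in the set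
      have : q ≤ tFun f p q x :=
        le_csSup (tFun_bddAbove hpq x) (Set.mem_insert_of_mem _ ⟨Set.right_mem_Icc.2 hpq, hxq.le⟩)
      exact hy.2.trans_le this
  · rintro ⟨hpy, hylt⟩
    obtain ⟨z, hz, hyz⟩ := exists_lt_of_lt_csSup (Set.insert_nonempty _ _) hylt
    rcases hz with rfl | hz
    · exact absurd hyz (not_lt.2 hpy)
    · have hyq : y < q := hyz.trans_le hz.1.2
      have hymem : y ∈ Set.Icc p q := ⟨hpy, hyq.le⟩
      exact ⟨⟨hpy, hyq⟩, (hmono hymem hz.1 hyz).trans_le hz.2⟩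

lemma tFun_continuous (hpq : p ≤ q) (hcont : ContinuousOn f (Set.Icc p q))
    (hmono : StrictMonoOn f (Set.Icc p q)) : Continuous (tFun f p q) := by
  apply monotone_icc_continuous (tFun_mono hpq) (tFun_mem hpq)
  intro y hy
  exact ⟨f y, tFun_comp hmono hy⟩

end tFun

noncomputable def sFun (f : ℝ → ℝ) (p q x : ℝ) : ℝ :=
  - tFun (fun z => f (-z)) (-q) (-p) x

section sFun

variable {f : ℝ → ℝ} {p q : ℝ}

lemma sFun_neg_mem (hpq : p ≤ q) : ∀ z ∈ Set.Icc (-q) (-p), -z ∈ Set.Icc p q :=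
  fun z hz => ⟨by linarith [hz.2], by linarith [hz.1]⟩

lemma sFun_g_mono (hanti : StrictAntiOn f (Set.Icc p q)) (hpq : p ≤ q) :
    StrictMonoOn (fun z => f (-z)) (Set.Icc (-q) (-p)) := by
  intro z1 hz1 z2 hz2 h12
  exact hanti (sFun_neg_mem hpq z2 hz2) (sFun_neg_mem hpq z1 hz1) (by linarith)

lemma sFun_g_cont (hcont : ContinuousOn f (Set.Icc p q)) (hpq : p ≤ q) :
    ContinuousOn (fun z => f (-z)) (Set.Icc (-q) (-p)) :=
  hcont.comp continuousOn_neg (sFun_neg_mem hpq)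

lemma sFun_mem (hpq : p ≤ q) (x : ℝ) : sFun f p q x ∈ Set.Icc p q := by
  have h := tFun_mem (f := fun z => f (-z)) (by linarith : -q ≤ -p) x
  exact ⟨by simpa [sFun] using neg_le_neg h.2, by simpa [sFun] using neg_le_neg h.1⟩

lemma sFun_key (hpq : p ≤ q) (hcont : ContinuousOn f (Set.Icc p q))
    (hanti : StrictAntiOn f (Set.Icc p q)) (x y : ℝ) :
    (y ∈ Set.Ioc p q ∧ f y < x) ↔ y ∈ Set.Ioc (sFun f p q x) q := by
  have h := tFun_key (by linarith : -q ≤ -p) (sFun_g_cont hcont hpq)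
    (sFun_g_mono hanti hpq) x (-y)
  rw [neg_neg] at h
  have hs : sFun f p q x = - tFun (fun z => f (-z)) (-q) (-p) x := rfl
  constructor
  · rintro ⟨hy, hfy⟩
    have hy' : -y ∈ Set.Ico (-q) (-p) := ⟨by linarith [hy.2], by linarith [hy.1]⟩
    have h2 := h.1 ⟨hy', hfy⟩
    refine ⟨?_, by linarith [h2.1]⟩
    rw [hs]
    linarith [h2.2]
  · rintro ⟨h1, h2⟩
    rw [hs] at h1
    have h3 := h.2 (Set.mem_Ico.mpr ⟨by linarith, by linarith⟩)
    exact ⟨⟨by linarith [h3.1.2], h2⟩, h3.2⟩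

lemma sFun_continuous (hpq : p ≤ q) (hcont : ContinuousOn f (Set.Icc p q))
    (hanti : StrictAntiOn f (Set.Icc p q)) : Continuous (sFun f p q) := by
  have := tFun_continuous (by linarith : -q ≤ -p) (sFun_g_cont hcont hpq)
    (sFun_g_mono hanti hpq)
  exact this.neg

end sFun

lemma exists_piece (c : ℕ → ℝ) {y : ℝ} :
    ∀ k : ℕ, c 0 ≤ y → y < c k → ∃ i, i < k ∧ c i ≤ y ∧ y < c (i + 1) := by
  intro k
  induction k with
  | zero => intro h1 h2; exact absurd (h1.trans_lt h2) (lt_irrefl _)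
  | succ k ih =>
      intro h1 h2
      rcases le_or_gt (c k) y with h | h
      · exact ⟨k, Nat.lt_succ_self k, h, h2⟩
      · obtain ⟨i, hik, h3⟩ := ih h1 h
        exact ⟨i, hik.trans (Nat.lt_succ_self k), h3⟩

/-- Let `v : ℕ → [a,b]` have a continuous asymptotic distribution function, and
let `f` be continuous on `[a,b]` and piecewise strictly monotone with respect to
some partition `a = c₀ < c₁ < … < c_m = b`. Then the sequence `{f(v(n))}` also
has a continuous asymptotic distribution function. -/
theorem stmt18 (a b : ℝ) (hab : a < b)
    (v : ℕ → ℝ) (hv : ∀ n : ℕ, v n ∈ Set.Icc a b)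
    (F : ℝ → ℝ) (hFcont : Continuous F)
    (hF : ∀ x : ℝ, Tendsto (densSeq {n : ℕ | v n < x}) atTop (nhds (F x)))
    (f : ℝ → ℝ) (hf : ContinuousOn f (Set.Icc a b))
    (m : ℕ) (hm : 0 < m) (c : ℕ → ℝ) (hc0 : c 0 = a) (hcm : c m = b)
    (hcmono : ∀ i < m, c i < c (i + 1))
    (hfmono : ∀ i < m, StrictMonoOn f (Set.Icc (c i) (c (i + 1))) ∨
      StrictAntiOn f (Set.Icc (c i) (c (i + 1)))) :
    ∃ G : ℝ → ℝ, Continuous G ∧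
      ∀ x : ℝ, Tendsto (densSeq {n : ℕ | f (v n) < x}) atTop (nhds (G x)) := by
  have hclt : ∀ j, j ≤ m → ∀ i, i < j → c i < c j := by
    intro j
    induction j with
    | zero => intro _ i hi; omega
    | succ k ih =>
        intro hk i hi
        rcases Nat.lt_succ_iff_lt_or_eq.mp hi with h | rfl
        · exact (ih (by omega) i h).trans (hcmono k (by omega))
        · exact hcmono i (by omega)
  have hcle : ∀ i j, i ≤ j → j ≤ m → c i ≤ c j := by
    intro i j hij hj
    rcases eq_or_lt_of_le hij with rfl | h
    · exact le_rfl
    · exact (hclt j hj i h).le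
  have hpiece_sub : ∀ i, i < m → Set.Icc (c i) (c (i + 1)) ⊆ Set.Icc a b := by
    intro i hi z hz
    exact ⟨hc0 ▸ (hcle 0 i (by omega) (by omega)).trans hz.1,
      hz.2.trans (hcm ▸ hcle (i + 1) m (by omega) le_rfl)⟩
  classical
  set g : ℕ → ℝ → ℝ := fun i x =>
    if StrictMonoOn f (Set.Icc (c i) (c (i + 1)))
    then F (tFun f (c i) (c (i + 1)) x) - F (c i)
    else F (c (i + 1)) - F (sFun f (c i) (c (i + 1)) x) with hg
  refine ⟨fun x => ∑ i ∈ Finset.range m, g i x, ?_, ?_⟩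
  · -- continuity of G
    apply continuous_finset_sum
    intro i hi
    rw [Finset.mem_range] at hi
    have hpq : c i ≤ c (i + 1) := (hcmono i hi).le
    have hcf : ContinuousOn f (Set.Icc (c i) (c (i + 1))) := hf.mono (hpiece_sub i hi)
    by_cases hMono : StrictMonoOn f (Set.Icc (c i) (c (i + 1)))
    · simp only [hg, if_pos hMono]
      exact (hFcont.comp (tFun_continuous hpq hcf hMono)).sub continuous_const
    · have hAnti : StrictAntiOn f (Set.Icc (c i) (c (i + 1))) :=
        (hfmono i hi).resolve_left hMono
      simp only [hg, if_neg hMono]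
      exact continuous_const.sub (hFcont.comp (sFun_continuous hpq hcf hAnti))
  · intro x
    set A : ℕ → Set ℕ := fun i => {n | v n ∈ Set.Ico (c i) (c (i + 1)) ∧ f (v n) < x} with hA
    set B : Set ℕ := {n | v n = b ∧ f (v n) < x} with hB
    have hcover : {n : ℕ | f (v n) < x} = (⋃ i ∈ Finset.range m, A i) ∪ B := by
      ext n
      simp only [Set.mem_setOf_eq, Set.mem_union, Set.mem_iUnion, Finset.mem_range, hA, hB,
        Set.mem_Ico]
      constructor
      · intro hfx
        rcases eq_or_lt_of_le (hv n).2 with heq | hlt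
        · exact Or.inr ⟨heq, hfx⟩
        · obtain ⟨i, him, h1, h2⟩ := exists_piece c m (hc0 ▸ (hv n).1) (hcm ▸ hlt)
          exact Or.inl ⟨i, him, ⟨h1, h2⟩, hfx⟩
      · rintro (⟨i, him, _, hfx⟩ | ⟨_, hfx⟩) <;> exact hfx
    have hdisjAB : Disjoint (⋃ i ∈ Finset.range m, A i) B := by
      rw [Set.disjoint_left]
      intro n hn hn'
      simp only [Set.mem_iUnion, Finset.mem_range, hA, Set.mem_setOf_eq, Set.mem_Ico] at hn
      obtain ⟨i, him, ⟨_, h2⟩, _⟩ := hn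
      have : v n < b := h2.trans_le (hcm ▸ hcle (i + 1) m (by omega) le_rfl)
      rw [hB, Set.mem_setOf_eq] at hn'
      exact absurd hn'.1 (ne_of_lt this)
    have hdisjA : ∀ i ∈ Finset.range m, ∀ j ∈ Finset.range m, i ≠ j →
        Disjoint (A i) (A j) := by
      have key : ∀ i j, i < j → j < m → Disjoint (A i) (A j) := by
        intro i j hij hjm
        rw [Set.disjoint_left]
        intro n hn hn'
        simp only [hA, Set.mem_setOf_eq, Set.mem_Ico] at hn hn'
        have h1 : c (i + 1) ≤ c j := hcle (i + 1) j (by omega) (by omega)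
        linarith [hn.1.2, hn'.1.1]
      intro i hi j hj hij
      rw [Finset.mem_range] at hi hj
      rcases lt_or_gt_of_ne hij with h | h
      · exact key i j h hj
      · exact (key j i h hi).symm
    have hdecomp : ∀ N, densSeq {n : ℕ | f (v n) < x} N
        = (∑ i ∈ Finset.range m, densSeq (A i) N) + densSeq B N := by
      intro N
      rw [densSeq_congr hcover, densSeq_union hdisjAB, densSeq_biUnion _ _ hdisjA]
    have hBlim : Tendsto (densSeq B) atTop (nhds 0) := by
      apply tendsto_of_tendsto_of_tendsto_of_le_of_le tendsto_const_nhds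
        (tendsto_densSeq_singleton hFcont hF b) (fun N => densSeq_nonneg B N)
      intro N
      apply densSeq_mono
      rw [hB]
      exact Set.setOf_subset_setOf.mpr (fun n h => h.1)
    have hpiece : ∀ i ∈ Finset.range m, Tendsto (densSeq (A i)) atTop (nhds (g i x)) := by
      intro i hi
      rw [Finset.mem_range] at hi
      have hpq : c i ≤ c (i + 1) := (hcmono i hi).le
      have hcf : ContinuousOn f (Set.Icc (c i) (c (i + 1))) := hf.mono (hpiece_sub i hi)
      by_cases hMono : StrictMonoOn f (Set.Icc (c i) (c (i + 1)))
      · have hkey := tFun_key hpq hcf hMono x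
        have hAset : A i = {n | v n ∈ Set.Ico (c i) (tFun f (c i) (c (i + 1)) x)} := by
          ext n
          simp only [hA, Set.mem_setOf_eq]
          exact hkey (v n)
        rw [hAset]
        simp only [hg, if_pos hMono]
        exact tendsto_densSeq_Ico hF (tFun_mem hpq x).1
      · have hAnti : StrictAntiOn f (Set.Icc (c i) (c (i + 1))) :=
          (hfmono i hi).resolve_left hMono
        have hkey := sFun_key hpq hcf hAnti x
        have hsmem := sFun_mem (f := f) hpq x
        set s := sFun f (c i) (c (i + 1)) x with hs
        set L : Set ℕ := {n | v n ∈ Set.Ioo s (c (i + 1))} with hL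
        have hlowsub : L ⊆ A i := by
          rw [hL, hA]
          apply Set.setOf_subset_setOf.mpr
          intro n hn
          have h2 := (hkey (v n)).2 ⟨hn.1, hn.2.le⟩
          exact ⟨⟨h2.1.1.le, hn.2⟩, h2.2⟩
        have hupsub : A i ⊆ L ∪ {n | v n = c i} := by
          rw [hL, hA]
          intro n hn
          simp only [Set.mem_setOf_eq, Set.mem_Ico] at hn
          rcases eq_or_lt_of_le hn.1.1 with heq | hlt
          · exact Or.inr (Set.mem_setOf_eq ▸ heq.symm)
          · have h1 := (hkey (v n)).1 ⟨⟨hlt, hn.1.2.le⟩, hn.2⟩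
            exact Or.inl (Set.mem_setOf_eq ▸ ⟨h1.1, hn.1.2⟩)
        have hLlim : Tendsto (densSeq L) atTop (nhds (F (c (i + 1)) - F s)) := by
          rcases eq_or_lt_of_le hsmem.2 with heq | hlt
          · have hLempty : L = (∅ : Set ℕ) := by
              rw [hL]
              ext n
              simp only [Set.mem_setOf_eq, Set.mem_Ioo, Set.mem_empty_iff_false, iff_false,
                not_and, not_lt]
              intro h
              exact (heq ▸ h).le
            rw [hLempty, heq, sub_self]
            exact tendsto_const_nhds.congr (fun N => (densSeq_empty N).symm)
          · exact tendsto_densSeq_Ioo hFcont hF hlt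
        have hsing := tendsto_densSeq_singleton hFcont hF (c i)
        have hupperlim : Tendsto (fun N => densSeq L N + densSeq {n | v n = c i} N)
            atTop (nhds (F (c (i + 1)) - F s)) := by
          have := hLlim.add hsing
          rwa [add_zero] at this
        simp only [hg, if_neg hMono]
        apply tendsto_of_tendsto_of_tendsto_of_le_of_le hLlim hupperlim
        · exact fun N => densSeq_mono hlowsub N
        · intro N
          calc densSeq (A i) N ≤ densSeq (L ∪ {n | v n = c i}) N := densSeq_mono hupsub N
            _ ≤ densSeq L N + densSeq {n | v n = c i} N := densSeq_union_le _ _ N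
    have hsum := (tendsto_finset_sum (Finset.range m) hpiece).add hBlim
    rw [add_zero] at hsum
    exact hsum.congr (fun N => (hdecomp N).symm)
end
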